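/- arXiv:2604.26448 — 3 statements merged into one kernel-verified Lean document; each statement's English description precedes it below -/
import Mathlib

section
/- Let D₁, …, D_N ⊆ ℝⁿ be measurable sets with μ(⋃_j D_j) ≤ V and pairwise intersection bounds μ(D_j ∩ D_ℓ) ≤ c·δ²/(|j − ℓ| + 1) for all j, ℓ and some constants c, δ > 0. If ∑_j μ(D_j) ≥ S, then V ≥ S²/(c·δ²·N·(1 + 2·∑_{m=1}^{N} 1/m)) ≳ S²/(c·δ²·N·log(N+2)). -/
/-!
The function `f = ∑ⱼ 𝟙_{Dⱼ}` vanishes off `U = ⋃ⱼ Dⱼ`, so Cauchy–Schwarz gives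
`(∑ⱼ μ Dⱼ)² = (∫ f)² ≤ μ U · ∫ f² = μ U · ∑ⱼ,ₗ μ (Dⱼ ∩ Dₗ)`. Each row of the pairwise bound
`c δ² / (|j - l| + 1)` sums to at most `c δ² (1 + 2 H_N)`, `H_N` the harmonic number,
and `H_N ≤ 1 + log N`.
-/

open MeasureTheory Finset
open scoped ENNReal

theorem sq_lintegral_le_measure_mul_lintegral_sq {α : Type*} [MeasurableSpace α]
    {μ : Measure α} {f : α → ℝ≥0∞} {s : Set α} (hf : AEMeasurable f μ)
    (hfs : f.support ⊆ s) :
    (∫⁻ x, f x ∂μ) ^ 2 ≤ μ s * ∫⁻ x, f x ^ 2 ∂μ := by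
  have holder := ENNReal.lintegral_mul_le_Lp_mul_Lq (μ.restrict s) .two_two hf.restrict
    (aemeasurable_const (b := (1 : ℝ≥0∞)))
  simp only [Pi.mul_apply, mul_one, ENNReal.rpow_two, one_pow, setLIntegral_one,
    setLIntegral_eq_of_support_subset hfs] at holder
  calc (∫⁻ x, f x ∂μ) ^ 2
      ≤ ((∫⁻ x in s, f x ^ 2 ∂μ) ^ (1 / 2 : ℝ) * μ s ^ (1 / 2 : ℝ)) ^ 2 := by gcongr
    _ = μ s * ∫⁻ x in s, f x ^ 2 ∂μ := by
        rw [mul_pow, ← ENNReal.rpow_mul_natCast, ← ENNReal.rpow_mul_natCast, mul_comm]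
        norm_num
    _ ≤ μ s * ∫⁻ x, f x ^ 2 ∂μ :=
        mul_le_mul_of_nonneg_left (setLIntegral_le_lintegral _ _) (by positivity)

theorem lintegral_sum_indicator_one {α ι : Type*} [MeasurableSpace α] (μ : Measure α)
    (s : Finset ι) {D : ι → Set α} (hD : ∀ j ∈ s, MeasurableSet (D j)) :
    ∫⁻ x, ∑ j ∈ s, (D j).indicator 1 x ∂μ = ∑ j ∈ s, μ (D j) := by
  rw [lintegral_finsetSum _ fun j hj => measurable_one.indicator (hD j hj)]
  exact sum_congr rfl fun j hj => lintegral_indicator_one (hD j hj)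

theorem sq_sum_measure_le_measure_iUnion_mul_sum_sum_measure_inter {α ι : Type*}
    [MeasurableSpace α] [Fintype ι] (μ : Measure α) {D : ι → Set α}
    (hD : ∀ j, MeasurableSet (D j)) :
    (∑ j, μ (D j)) ^ 2 ≤ μ (⋃ j, D j) * ∑ j, ∑ l, μ (D j ∩ D l) := by
  set f : α → ℝ≥0∞ := fun x => ∑ j, (D j).indicator 1 x
  have hfm : Measurable f := Finset.measurable_sum _ fun j _ => measurable_one.indicator (hD j)
  have hsupp : f.support ⊆ ⋃ j, D j := fun x hx =>
    have ⟨j, _, hj⟩ := exists_ne_zero_of_sum_ne_zero hx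
    Set.mem_iUnion.mpr ⟨j, Set.mem_of_indicator_ne_zero hj⟩
  have hf_sq (x : α) : f x ^ 2 = ∑ p : ι × ι, (D p.1 ∩ D p.2).indicator 1 x := by
    simp only [f, sq, sum_mul_sum, Set.inter_indicator_one, Pi.mul_apply, Fintype.sum_prod_type]
  have hf : ∫⁻ x, f x ∂μ = ∑ j, μ (D j) := lintegral_sum_indicator_one μ _ fun j _ => hD j
  have hf2 : ∫⁻ x, f x ^ 2 ∂μ = ∑ j, ∑ l, μ (D j ∩ D l) := by
    rw [lintegral_congr hf_sq,
      lintegral_sum_indicator_one μ _ fun (p : ι × ι) _ => (hD p.1).inter (hD p.2),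
      Fintype.sum_prod_type]
  rw [← hf, ← hf2]
  exact sq_lintegral_le_measure_mul_lintegral_sq hfm.aemeasurable hsupp

theorem harmonic_eq_sum_range_one_div (n : ℕ) :
    (harmonic n : ℝ) = ∑ k ∈ range n, 1 / ((k : ℝ) + 1) := by
  simp [harmonic]

theorem harmonic_mono : Monotone harmonic := fun _ _ h =>
  sum_le_sum_of_subset_of_nonneg (range_mono h) fun _ _ _ => by positivity

theorem harmonic_nonneg (n : ℕ) : (0 : ℝ) ≤ harmonic n := by
  exact_mod_cast harmonic_zero ▸ harmonic_mono n.zero_le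

theorem sum_range_one_div_abs_sub_add_one_le {N j : ℕ} (hj : j < N) :
    ∑ l ∈ range N, 1 / (|(j : ℝ) - l| + 1) ≤ 1 + 2 * harmonic N := by
  have hmono {m : ℕ} (h : m ≤ N) : (harmonic m : ℝ) ≤ harmonic N := by
    exact_mod_cast harmonic_mono h
  have hleft : ∑ l ∈ range (j + 1), 1 / (|(j : ℝ) - l| + 1) = harmonic (j + 1) := by
    rw [harmonic_eq_sum_range_one_div, ← sum_range_reflect]
    refine sum_congr rfl fun l hl => ?_
    have hlj : l ≤ j := Nat.lt_succ_iff.mp (mem_range.mp hl)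
    rw [Nat.add_sub_cancel, Nat.cast_sub hlj, sub_sub_cancel, abs_of_nonneg (Nat.cast_nonneg _)]
  have hright : ∑ l ∈ Ico (j + 1) N, 1 / (|(j : ℝ) - l| + 1) ≤ harmonic (N - (j + 1)) := by
    rw [sum_Ico_eq_sum_range, harmonic_eq_sum_range_one_div]
    refine sum_le_sum fun k _ => one_div_le_one_div_of_le (by positivity) ?_
    rw [abs_sub_comm]
    push_cast
    rw [abs_of_nonneg (by linarith)]
    linarith
  rw [← sum_range_add_sum_Ico _ hj]
  linarith [hmono hj, hmono (Nat.sub_le N (j + 1)), harmonic_nonneg N]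

theorem sum_sum_one_div_abs_sub_add_one_le (N : ℕ) :
    ∑ j : Fin N, ∑ l : Fin N, 1 / (|((j : ℕ) : ℝ) - ((l : ℕ) : ℝ)| + 1) ≤
      N * (1 + 2 * harmonic N) := by
  rw [Fin.sum_univ_eq_sum_range (fun j => ∑ l : Fin N, 1 / (|(j : ℝ) - ((l : ℕ) : ℝ)| + 1)),
    sum_congr rfl fun (j : ℕ) _ => Fin.sum_univ_eq_sum_range (fun l => 1 / (|(j : ℝ) - l| + 1)) N]
  calc _ ≤ ∑ _j ∈ range N, (1 + 2 * (harmonic N : ℝ)) :=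
        sum_le_sum fun j hj => sum_range_one_div_abs_sub_add_one_le (mem_range.mp hj)
    _ = N * (1 + 2 * harmonic N) := by rw [sum_const, card_range, nsmul_eq_mul]

theorem one_add_two_mul_harmonic_le_five_mul_log {N : ℕ} (hN : 1 ≤ N) :
    1 + 2 * (harmonic N : ℝ) ≤ 5 * Real.log (N + 2) := by
  have hN' : (1 : ℝ) ≤ N := by exact_mod_cast hN
  have hlog_ge_one : 1 ≤ Real.log (N + 2) := by
    rw [Real.le_log_iff_exp_le (by positivity)]
    linarith [Real.exp_one_lt_d9]
  have hlog_mono : Real.log N ≤ Real.log (N + 2) := Real.log_le_log (by positivity) (by linarith)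
  linarith [harmonic_le_one_add_log N]

section PairwiseIntersections

variable {α : Type*} [MeasurableSpace α] (μ : Measure α) {N : ℕ} {D : Fin N → Set α} {a : ℝ}

theorem sum_sum_measure_inter_le (ha : 0 ≤ a)
    (hinter : ∀ j l : Fin N,
      μ (D j ∩ D l) ≤ ENNReal.ofReal (a / (|((j : ℕ) : ℝ) - ((l : ℕ) : ℝ)| + 1))) :
    ∑ j, ∑ l, μ (D j ∩ D l) ≤ ENNReal.ofReal (a * N * (1 + 2 * harmonic N)) := by
  calc ∑ j, ∑ l, μ (D j ∩ D l)
      ≤ ∑ j : Fin N, ∑ l : Fin N,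
          ENNReal.ofReal (a / (|((j : ℕ) : ℝ) - ((l : ℕ) : ℝ)| + 1)) :=
        sum_le_sum fun j _ => sum_le_sum fun l _ => hinter j l
    _ = ENNReal.ofReal
          (a * ∑ j : Fin N, ∑ l : Fin N, 1 / (|((j : ℕ) : ℝ) - ((l : ℕ) : ℝ)| + 1)) := by
        simp only [mul_sum, mul_one_div]
        rw [ENNReal.ofReal_sum_of_nonneg fun _ _ => sum_nonneg fun _ _ => by positivity]
        exact sum_congr rfl fun _ _ => (ENNReal.ofReal_sum_of_nonneg fun _ _ => by positivity).symm
    _ ≤ ENNReal.ofReal (a * N * (1 + 2 * harmonic N)) := by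
        rw [mul_assoc a]
        gcongr
        exact sum_sum_one_div_abs_sub_add_one_le N

theorem sq_div_le_of_measure_inter_le {V S : ℝ} (hN : 1 ≤ N) (ha : 0 < a) (hS : 0 < S)
    (hD : ∀ j, MeasurableSet (D j)) (hV : μ (⋃ j, D j) ≤ ENNReal.ofReal V)
    (hinter : ∀ j l : Fin N,
      μ (D j ∩ D l) ≤ ENNReal.ofReal (a / (|((j : ℕ) : ℝ) - ((l : ℕ) : ℝ)| + 1)))
    (hsum : ENNReal.ofReal S ≤ ∑ j, μ (D j)) :
    S ^ 2 / (a * N * (1 + 2 * harmonic N)) ≤ V := by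
  have hA : 0 < a * N * (1 + 2 * harmonic N) := by
    have : (0 : ℝ) < N := by exact_mod_cast hN
    have := harmonic_nonneg N
    positivity
  have h := (pow_le_pow_left' hsum 2).trans
    ((sq_sum_measure_le_measure_iUnion_mul_sum_sum_measure_inter μ hD).trans
      (mul_le_mul' hV (sum_sum_measure_inter_le μ ha.le hinter)))
  rw [← ENNReal.ofReal_pow hS.le, ← ENNReal.ofReal_mul' hA.le,
    ENNReal.ofReal_le_ofReal_iff'] at h
  rw [div_le_iff₀ hA]
  rcases h with h | h
  · linarith
  · nlinarith

end PairwiseIntersections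

theorem union_volume_lower_bound :
    ∃ C : ℝ, 0 < C ∧ ∀ (n N : ℕ) (D : Fin N → Set (EuclideanSpace ℝ (Fin n)))
      (V S c δ : ℝ), 1 ≤ N → 0 < c → 0 < δ → 0 < S →
      (∀ j, MeasurableSet (D j)) →
      volume (⋃ j, D j) ≤ ENNReal.ofReal V →
      (∀ j l : Fin N,
        volume (D j ∩ D l) ≤ ENNReal.ofReal (c * δ^2 / (|((j:ℕ):ℝ) - ((l:ℕ):ℝ)| + 1))) →
      ENNReal.ofReal S ≤ ∑ j, volume (D j) →
      S^2 / (c * δ^2 * N * (1 + 2 * ∑ m ∈ Finset.Icc 1 N, (1:ℝ)/(m:ℝ))) ≤ V ∧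
      S^2 / (C * c * δ^2 * N * Real.log ((N:ℝ)+2)) ≤ V := by
  refine ⟨5, by norm_num, fun n N D V S c δ hN hc hδ hS hD hV hinter hsum => ?_⟩
  have hH : ∑ m ∈ Icc 1 N, (1 : ℝ) / m = harmonic N := by simp [harmonic_eq_sum_Icc]
  rw [hH]
  have hbound := sq_div_le_of_measure_inter_le volume hN (by positivity) hS hD hV hinter hsum
  refine ⟨hbound, le_trans (div_le_div_of_nonneg_left (sq_nonneg S) ?_ ?_) hbound⟩
  · have : (0 : ℝ) < N := by exact_mod_cast hN
    have := harmonic_nonneg N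
    positivity
  · calc c * δ ^ 2 * N * (1 + 2 * harmonic N)
        ≤ c * δ ^ 2 * N * (5 * Real.log (N + 2)) := by
          gcongr; exact one_add_two_mul_harmonic_le_five_mul_log hN
      _ = 5 * c * δ ^ 2 * N * Real.log (N + 2) := by ring
end

section
/- Let A ⊂ S^{n-2} ⊂ ℝ^{n-1} be a finite 2^{−k}-separated subset of the unit sphere with card(A) ≤ λ·2^{−kβ}·2^{k(n-2)}, where n ≥ 4. Then for every μ ∈ A, ∑_{ν ∈ A} 2^{−2k}/(2^k‖ν − μ‖ + 1) ≲ λ^{(n-3)/(n-2)}·2^{−kβ(n-3)/(n-2)}·2^{k(n-5)}, with implicit constant depending only on n. -/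
/-!
Put `δ = 2^{-k}`. On each of the `2(n-1)` caps `{x : ⟪±eᵢ, x⟫ ≥ 1/(n-1)}`, which cover the
sphere, orthogonal projection onto `eᵢᗮ` is bi-Lipschitz, so a volume packing argument in that
hyperplane shows that at most `≲ t^{n-2}` points of `A` lie within distance `tδ` of `μ`.
Dominating `1/(u+1)` by `2 ∑_{2^j ≥ u} 2^{-j}` bounds the sum by
`∑_j 2^{-j} min(N, C 2^{j(n-2)})`, where `N ≥ #A`; splitting the scales at `2^j ≈ T = N^{1/(n-2)}`
leaves two geometric series, each `≲ T^{n-3}`.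
-/

open Metric Finset Module MeasureTheory RealInnerProductSpace

theorem card_le_of_separated_of_dist_le {F : Type*} [NormedAddCommGroup F] [NormedSpace ℝ F]
    [FiniteDimensional ℝ F] {B : Finset F} {c : F} {r δ : ℝ} (hδ : 0 < δ) (hr : 0 ≤ r)
    (hsep : (B : Set F).Pairwise (δ ≤ dist · ·)) (hB : ∀ x ∈ B, dist x c ≤ r) :
    (#B : ℝ) ≤ (2 * r / δ + 1) ^ finrank ℝ F := by
  borelize F
  set μ : Measure F := Measure.addHaar
  have hδ2 : 0 < δ / 2 := half_pos hδ
  have hdisj : (B : Set F).PairwiseDisjoint (ball · (δ / 2)) := fun x hx y hy hxy =>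
    ball_disjoint_ball (by linarith [hsep hx hy hxy])
  have hsub : ⋃ x ∈ B, ball x (δ / 2) ⊆ ball c (r + δ / 2) :=
    Set.iUnion₂_subset fun x hx => ball_subset_ball' (by linarith [hB x hx])
  have hvol : ∀ (x : F) {ρ : ℝ}, 0 < ρ → μ.real (ball x ρ) = ρ ^ finrank ℝ F * μ.real (ball 0 1) :=
    fun x ρ hρ => by
      rw [measureReal_def, Measure.addHaar_ball_of_pos μ x hρ, ENNReal.toReal_mul,
        ENNReal.toReal_ofReal (by positivity), measureReal_def]
  have hV : 0 < μ.real (ball (0 : F) 1) :=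
    ENNReal.toReal_pos (measure_ball_pos μ 0 one_pos).ne' measure_ball_lt_top.ne
  have key : (#B : ℝ) * (δ / 2) ^ finrank ℝ F ≤ (r + δ / 2) ^ finrank ℝ F := by
    have h := measureReal_mono (μ := μ) hsub
    rw [measureReal_biUnion_finset hdisj (fun _ _ => measurableSet_ball), hvol c (by linarith)] at h
    simp only [hvol _ hδ2, sum_const, nsmul_eq_mul] at h
    nlinarith
  calc (#B : ℝ) ≤ (r + δ / 2) ^ finrank ℝ F / (δ / 2) ^ finrank ℝ F := by
        rwa [le_div_iff₀ (by positivity)]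
    _ = (2 * r / δ + 1) ^ finrank ℝ F := by rw [← div_pow]; congr 1; field_simp

theorem inv_add_one_le_two_mul_sum_ite {u : ℝ} (hu : 0 ≤ u) {J : ℕ} (huJ : u ≤ 2 ^ J) :
    (u + 1)⁻¹ ≤ 2 * ∑ j ∈ range (J + 1), if u ≤ 2 ^ j then ((2 : ℝ) ^ j)⁻¹ else 0 := by
  induction J with
  | zero =>
    rw [sum_range_one, if_pos huJ, pow_zero, inv_one]
    linarith [inv_le_one_of_one_le₀ (by linarith : (1 : ℝ) ≤ u + 1)]
  | succ J ih =>
    have hnonneg : 0 ≤ ∑ j ∈ range (J + 1), if u ≤ 2 ^ j then ((2 : ℝ) ^ j)⁻¹ else 0 :=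
      sum_nonneg fun j _ => by split_ifs <;> positivity
    rw [sum_range_succ, if_pos huJ]
    by_cases h : u ≤ 2 ^ J
    · linarith [ih h, inv_nonneg.mpr (pow_nonneg zero_le_two (J + 1) : (0 : ℝ) ≤ 2 ^ (J + 1))]
    · have : (u + 1)⁻¹ ≤ 2 * ((2 : ℝ) ^ (J + 1))⁻¹ :=
        calc (u + 1)⁻¹ ≤ ((2 : ℝ) ^ J)⁻¹ := inv_anti₀ (by positivity) (by linarith)
          _ = 2 * ((2 : ℝ) ^ (J + 1))⁻¹ := by rw [pow_succ]; field_simp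
      linarith

theorem sum_div_two_pow_le {d : ℕ} (hd : 2 ≤ d) {c : ℕ → ℝ} {D T : ℝ} (hD : 0 ≤ D) (hT : 1 ≤ T)
    (hc0 : ∀ j, 0 ≤ c j) (hcT : ∀ j, c j ≤ T ^ d) (hcD : ∀ j, c j ≤ D * (2 ^ j) ^ d) (J : ℕ) :
    ∑ j ∈ range J, c j / 2 ^ j ≤ (2 ^ (d - 1) * D + 2) * T ^ (d - 1) := by
  obtain ⟨e, rfl⟩ : ∃ e, d = e + 1 := ⟨d - 1, by omega⟩
  rw [Nat.add_sub_cancel]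
  -- split the dyadic scales at `M`, where `T < 2 ^ M ≤ 2 * T`
  obtain ⟨m, hmT, hTm⟩ := exists_nat_pow_near hT one_lt_two
  set M := m + 1
  have hTpos : 0 < T := by linarith
  have hsmall : ∑ j ∈ range M, c j / 2 ^ j ≤ 2 ^ e * D * T ^ e := by
    have hx : (2 : ℝ) ≤ 2 ^ e := le_self_pow₀ one_le_two (by omega)
    calc ∑ j ∈ range M, c j / 2 ^ j ≤ ∑ j ∈ range M, D * ((2 : ℝ) ^ e) ^ j :=
          sum_le_sum fun j _ => by
            rw [div_le_iff₀ (by positivity)]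
            calc c j ≤ D * (2 ^ j) ^ (e + 1) := hcD j
              _ = D * ((2 : ℝ) ^ e) ^ j * 2 ^ j := by ring
      _ ≤ D * ((2 : ℝ) ^ e) ^ M := by
          rw [← mul_sum, geom_sum_eq (by linarith)]
          gcongr
          rw [div_le_iff₀ (by linarith)]
          nlinarith [one_le_pow₀ (by linarith : (1 : ℝ) ≤ 2 ^ e) (n := M)]
      _ ≤ 2 ^ e * D * T ^ e := by
          have : (2 : ℝ) ^ M ≤ 2 * T := by rw [pow_succ, mul_comm]; linarith
          calc D * ((2 : ℝ) ^ e) ^ M = D * ((2 : ℝ) ^ M) ^ e := by ring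
            _ ≤ D * (2 * T) ^ e := by gcongr
            _ = 2 ^ e * D * T ^ e := by ring
  have hlarge : ∑ j ∈ range J, c (M + j) / 2 ^ (M + j) ≤ 2 * T ^ e := by
    calc ∑ j ∈ range J, c (M + j) / 2 ^ (M + j)
        ≤ ∑ j ∈ range J, T ^ (e + 1) / 2 ^ M * (1 / 2) ^ j :=
          sum_le_sum fun j _ => by
            rw [pow_add, one_div_pow, ← div_eq_mul_one_div, div_div]
            gcongr
            exact hcT _
      _ ≤ T ^ (e + 1) / T * 2 := by
          rw [← mul_sum]
          gcongr
          exact sum_geometric_two_le J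
      _ = 2 * T ^ e := by rw [pow_succ]; field_simp
  calc ∑ j ∈ range J, c j / 2 ^ j ≤ ∑ j ∈ range (M + J), c j / 2 ^ j :=
        sum_le_sum_of_subset_of_nonneg (range_subset_range.mpr (by omega)) fun j _ _ =>
          div_nonneg (hc0 j) (by positivity)
    _ ≤ 2 ^ e * D * T ^ e + 2 * T ^ e := by
        rw [sum_range_add]
        exact add_le_add hsmall hlarge
    _ = (2 ^ e * D + 2) * T ^ e := by ring

section InnerProductSpace

variable {E : Type*} [NormedAddCommGroup E] [InnerProductSpace ℝ E]

theorem dist_le_mul_dist_orthogonalProjectionOnto {v x y : E} {a : ℝ} (hv : ‖v‖ = 1)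
    (hx : ‖x‖ = 1) (hy : ‖y‖ = 1) (ha : 0 < a) (hxa : a ≤ ⟪v, x⟫) (hya : a ≤ ⟪v, y⟫) :
    dist x y ≤ (a⁻¹ + 1) *
      dist ((ℝ ∙ v)ᗮ.orthogonalProjectionOnto x) ((ℝ ∙ v)ᗮ.orthogonalProjectionOnto y) := by
  set P := (ℝ ∙ v)ᗮ.starProjection
  have hP : ∀ z, P z = z - ⟪v, z⟫ • v := fun z => by
    simp [P, Submodule.starProjection_unit_singleton ℝ hv]
  rw [dist_eq_norm, dist_eq_norm, ← map_sub, Submodule.coe_norm,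
    Submodule.coe_orthogonalProjectionOnto_apply]
  set w := x - y
  set s := x + y
  -- `x + y ⟂ x - y` because `‖x‖ = ‖y‖`; splitting both along `v` bounds the `v`-component of `w`
  have hws : ⟪v, w⟫ * ⟪v, s⟫ = -⟪P w, P s⟫ := by
    have h0 : ⟪s, w⟫ = 0 := (real_inner_add_sub_eq_zero_iff x y).mpr (hx.trans hy.symm)
    simp only [hP, inner_sub_left, inner_sub_right, real_inner_smul_left, real_inner_smul_right,
      real_inner_self_eq_norm_sq, hv, real_inner_comm w v]
    rw [real_inner_comm] at h0
    linear_combination h0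
  have hPs : ‖P s‖ ≤ 2 := (Submodule.norm_starProjection_apply_le _ s).trans
    ((norm_add_le x y).trans (by rw [hx, hy]; norm_num))
  have hvw : a * |⟪v, w⟫| ≤ ‖P w‖ := by
    have hvs : 2 * a ≤ ⟪v, s⟫ := by rw [inner_add_right]; linarith
    have : |⟪v, w⟫| * ⟪v, s⟫ ≤ ‖P w‖ * 2 := by
      calc |⟪v, w⟫| * ⟪v, s⟫ = |⟪P w, P s⟫| := by
            rw [← abs_of_pos (by linarith : 0 < ⟪v, s⟫), ← abs_mul, hws, abs_neg]
        _ ≤ ‖P w‖ * ‖P s‖ := abs_real_inner_le_norm _ _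
        _ ≤ ‖P w‖ * 2 := by gcongr
    nlinarith [abs_nonneg ⟪v, w⟫]
  calc ‖w‖ = ‖⟪v, w⟫ • v + P w‖ := by rw [hP]; abel_nf
    _ ≤ |⟪v, w⟫| + ‖P w‖ := by
        simpa [norm_smul, hv] using norm_add_le (⟪v, w⟫ • v) (P w)
    _ ≤ (a⁻¹ + 1) * ‖P w‖ := by
        have : |⟪v, w⟫| ≤ ‖P w‖ / a := by rwa [le_div_iff₀' ha]
        rw [add_mul, one_mul, inv_mul_eq_div]
        linarith

theorem card_le_of_separated_of_le_inner [FiniteDimensional ℝ E] {d : ℕ} (hE : finrank ℝ E = d + 1)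
    {G : Finset E} {v c : E} {a r δ : ℝ} (hv : ‖v‖ = 1) (ha : 0 < a) (hδ : 0 < δ) (hr : 0 ≤ r)
    (hG : ∀ x ∈ G, ‖x‖ = 1) (hGv : ∀ x ∈ G, a ≤ ⟪v, x⟫)
    (hsep : (G : Set E).Pairwise (δ ≤ dist · ·)) (hc : ∀ x ∈ G, dist x c ≤ r) :
    (#G : ℝ) ≤ (2 * (a⁻¹ + 1) * r / δ + 1) ^ d := by
  classical
  have : Fact (finrank ℝ E = d + 1) := ⟨hE⟩
  set π := (ℝ ∙ v)ᗮ.orthogonalProjectionOnto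
  have hπ : ∀ x y, dist (π x) (π y) ≤ dist x y := fun x y => by
    simpa only [dist_eq_norm, ← map_sub] using (ℝ ∙ v)ᗮ.norm_orthogonalProjectionOnto_apply_le _
  have hK : 0 < a⁻¹ + 1 := by positivity
  have hbi : ∀ x ∈ G, ∀ y ∈ G, δ / (a⁻¹ + 1) ≤ dist (π x) (π y) ∨ x = y := by
    intro x hx y hy
    refine or_iff_not_imp_right.mpr fun hxy => ?_
    rw [div_le_iff₀' hK]
    exact (hsep hx hy hxy).trans (dist_le_mul_dist_orthogonalProjectionOnto hv (hG x hx) (hG y hy)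
      ha (hGv x hx) (hGv y hy))
  have hinj : Set.InjOn π G := fun x hx y hy hxy =>
    (hbi x hx y hy).resolve_left (by rw [hxy, dist_self, not_le]; positivity)
  have hpack := card_le_of_separated_of_dist_le (B := G.image π) (c := π c)
    (δ := δ / (a⁻¹ + 1)) (by positivity) hr
    (by
      rw [coe_image]
      rintro _ ⟨x, hx, rfl⟩ _ ⟨y, hy, rfl⟩ hne
      exact (hbi x hx y hy).resolve_right fun h => hne (by rw [h]))
    (by
      rintro _ hx'
      obtain ⟨x, hx, rfl⟩ := mem_image.mp hx'
      exact (hπ x c).trans (hc x hx))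
  rw [card_image_of_injOn hinj, Submodule.finrank_orthogonal_span_singleton (n := d)
    (ne_zero_of_norm_ne_zero (hv.symm ▸ one_ne_zero))] at hpack
  convert hpack using 3
  field_simp

theorem OrthonormalBasis.exists_inv_card_le_abs_inner {ι : Type*} [Fintype ι]
    (b : OrthonormalBasis ι ℝ E) {x : E} (hx : ‖x‖ = 1) :
    ∃ i, (Fintype.card ι : ℝ)⁻¹ ≤ |⟪b i, x⟫| := by
  have hsq : ∑ i, |⟪b i, x⟫| ^ 2 = 1 := by
    simpa [hx] using b.sum_sq_norm_inner_right x
  have hle : ∀ i, |⟪b i, x⟫| ≤ 1 := fun i =>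
    (abs_real_inner_le_norm _ _).trans (by rw [b.orthonormal.1 i, hx, one_mul])
  have hne : (univ : Finset ι).Nonempty := by
    by_contra h
    simp [not_nonempty_iff_eq_empty.mp h] at hsq
  have hcard : (Fintype.card ι : ℝ) ≠ 0 := by
    simpa [← card_univ] using hne.card_pos.ne'
  obtain ⟨i, -, hi⟩ := exists_le_of_sum_le hne (f := fun _ => (Fintype.card ι : ℝ)⁻¹)
    (g := fun i => |⟪b i, x⟫|) (by
      rw [sum_const, card_univ, nsmul_eq_mul, mul_inv_cancel₀ hcard, ← hsq]
      exact sum_le_sum fun i _ => by nlinarith [abs_nonneg ⟪b i, x⟫, hle i])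
  exact ⟨i, hi⟩

theorem card_filter_dist_le_mul_le [FiniteDimensional ℝ E] {d : ℕ} (hE : finrank ℝ E = d + 1)
    {A : Finset E} {δ t : ℝ} (hA : (A : Set E) ⊆ sphere 0 1)
    (hsep : (A : Set E).Pairwise (δ ≤ dist · ·)) (hδ : 0 < δ) (ht : 1 ≤ t) (μ : E) :
    (#{ν ∈ A | dist ν μ ≤ t * δ} : ℝ) ≤ 2 * (d + 1) * (2 * d + 5) ^ d * t ^ d := by
  classical
  set b := stdOrthonormalBasis ℝ E
  set a : ℝ := (d + 1 : ℝ)⁻¹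
  set F := {ν ∈ A | dist ν μ ≤ t * δ}
  set w : Fin (finrank ℝ E) ⊕ Fin (finrank ℝ E) → E := Sum.elim b (-b)
  have hnorm : ∀ x ∈ F, ‖x‖ = 1 := fun x hx => by
    simpa using hA (mem_filter.mp hx).1
  have hcover : F ⊆ univ.biUnion fun j => {x ∈ F | a ≤ ⟪w j, x⟫} := by
    intro x hx
    obtain ⟨i, hi⟩ := b.exists_inv_card_le_abs_inner (hnorm x hx)
    simp only [Fintype.card_fin, hE, Nat.cast_add, Nat.cast_one] at hi
    rcases le_abs'.mp hi with h | h
    · refine mem_biUnion.mpr ⟨Sum.inr i, mem_univ _, mem_filter.mpr ⟨hx, ?_⟩⟩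
      simp only [w, Sum.elim_inr, Pi.neg_apply, inner_neg_left]
      linarith
    · exact mem_biUnion.mpr ⟨Sum.inl i, mem_univ _, mem_filter.mpr ⟨hx, by simpa [w] using h⟩⟩
  have hcap : ∀ j, (#{x ∈ F | a ≤ ⟪w j, x⟫} : ℝ) ≤ ((2 * d + 5) * t) ^ d := fun j => by
    refine (card_le_of_separated_of_le_inner hE (by cases j <;> simp [w, b.orthonormal.1])
      (by positivity) hδ (by positivity) (fun x hx => hnorm x (mem_filter.mp hx).1)
      (fun x hx => (mem_filter.mp hx).2)
      (hsep.mono fun x hx => (mem_filter.mp (mem_filter.mp hx).1).1) (c := μ)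
      (fun x hx => (mem_filter.mp (mem_filter.mp hx).1).2)).trans ?_
    gcongr
    simp only [a, inv_inv]
    field_simp
    nlinarith
  calc (#F : ℝ) ≤ ∑ j, (#{x ∈ F | a ≤ ⟪w j, x⟫} : ℝ) := by
        exact_mod_cast (card_le_card hcover).trans card_biUnion_le
    _ ≤ ∑ _j : Fin (finrank ℝ E) ⊕ Fin (finrank ℝ E), ((2 * d + 5) * t) ^ d :=
        sum_le_sum fun j _ => hcap j
    _ = 2 * (d + 1) * (2 * d + 5) ^ d * t ^ d := by
        simp [hE, mul_pow]; ring

theorem exists_sum_inv_dist_div_add_one_le [FiniteDimensional ℝ E] {d : ℕ} (hd : 2 ≤ d)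
    (hE : finrank ℝ E = d + 1) :
    ∃ C > 0, ∀ (A : Finset E) (δ N : ℝ), (A : Set E) ⊆ sphere 0 1 →
      (A : Set E).Pairwise (δ ≤ dist · ·) → 0 < δ → (#A : ℝ) ≤ N → ∀ μ : E,
      ∑ ν ∈ A, (dist ν μ / δ + 1)⁻¹ ≤ C * N ^ (((d : ℝ) - 1) / d) := by
  set D : ℝ := 2 * (d + 1) * (2 * d + 5) ^ d
  refine ⟨2 * (2 ^ (d - 1) * D + 2), by positivity, fun A δ N hA hsep hδ hN μ => ?_⟩
  rcases A.eq_empty_or_nonempty with rfl | hne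
  · simp only [sum_empty]
    have : 0 ≤ N := le_trans (by positivity) hN
    positivity
  have hN1 : 1 ≤ N := le_trans (by exact_mod_cast hne.card_pos) hN
  have hd0 : (d : ℝ) ≠ 0 := by positivity
  set T := N ^ ((1 : ℝ) / d)
  have hT : 1 ≤ T := Real.one_le_rpow hN1 (by positivity)
  have hTd : T ^ d = N := by
    rw [← Real.rpow_natCast, ← Real.rpow_mul (by linarith), one_div_mul_cancel hd0, Real.rpow_one]
  have hTd1 : T ^ (d - 1) = N ^ (((d : ℝ) - 1) / d) := by
    rw [← Real.rpow_natCast, ← Real.rpow_mul (by linarith), Nat.cast_sub (by omega)]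
    ring_nf
  obtain ⟨J, hJ⟩ := pow_unbounded_of_one_lt (∑ ν ∈ A, dist ν μ / δ) one_lt_two
  set c : ℕ → ℝ := fun j => #{ν ∈ A | dist ν μ / δ ≤ 2 ^ j}
  have hcD : ∀ j, c j ≤ D * (2 ^ j) ^ d := fun j => by
    simp only [c, div_le_iff₀ hδ]
    exact card_filter_dist_le_mul_le hE hA hsep hδ (one_le_pow₀ one_le_two) μ
  have hcT : ∀ j, c j ≤ T ^ d := fun j => by
    rw [hTd]
    exact le_trans (by simpa only [c, Nat.cast_le] using card_filter_le _ _) hN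
  calc ∑ ν ∈ A, (dist ν μ / δ + 1)⁻¹
      ≤ ∑ ν ∈ A, 2 * ∑ j ∈ range (J + 1),
          if dist ν μ / δ ≤ 2 ^ j then ((2 : ℝ) ^ j)⁻¹ else 0 :=
        sum_le_sum fun ν hν => inv_add_one_le_two_mul_sum_ite (by positivity)
          ((single_le_sum (fun x _ => by positivity) hν).trans hJ.le)
    _ = 2 * ∑ j ∈ range (J + 1), c j / 2 ^ j := by
        rw [← mul_sum, sum_comm]
        simp only [c, ← sum_filter, sum_const, nsmul_eq_mul, div_eq_mul_inv]
    _ ≤ 2 * ((2 ^ (d - 1) * D + 2) * T ^ (d - 1)) := by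
        gcongr
        exact sum_div_two_pow_le hd (by positivity) hT (fun j => by positivity) hcT hcD _
    _ = 2 * (2 ^ (d - 1) * D + 2) * N ^ (((d : ℝ) - 1) / d) := by rw [hTd1, mul_assoc]

end InnerProductSpace

theorem separated_sphere_sum_bound (n : ℕ) (hn : 4 ≤ n) :
    ∃ C : ℝ, 0 < C ∧ ∀ (A : Finset (EuclideanSpace ℝ (Fin (n-1)))) (lam β : ℝ) (k : ℕ),
      0 < lam → 0 < β →
      (↑A : Set (EuclideanSpace ℝ (Fin (n-1)))) ⊆
        Metric.sphere (0 : EuclideanSpace ℝ (Fin (n-1))) 1 →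
      (∀ ν ∈ A, ∀ μ ∈ A, ν ≠ μ → 2^(-(k:ℝ)) ≤ dist ν μ) →
      (A.card : ℝ) ≤ lam * 2^(-(k:ℝ)*β) * 2^((k:ℝ)*((n:ℝ)-2)) →
      ∀ μ ∈ A, ∑ ν ∈ A, 2^(-2*(k:ℝ))/(2^((k:ℝ)) * dist ν μ + 1) ≤
        C * lam^(((n:ℝ)-3)/((n:ℝ)-2)) * 2^(-(k:ℝ)*β*(((n:ℝ)-3)/((n:ℝ)-2))) *
          2^((k:ℝ)*((n:ℝ)-5)) := by
  obtain ⟨d, rfl⟩ : ∃ d, n = d + 2 := ⟨n - 2, by omega⟩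
  obtain ⟨C, hC, hsum⟩ := exists_sum_inv_dist_div_add_one_le
    (E := EuclideanSpace ℝ (Fin (d + 2 - 1))) (d := d) (by omega) (by simp)
  refine ⟨C, hC, fun A lam β k hlam _ hA hsep hcard μ _ => ?_⟩
  have hd : (d : ℝ) ≠ 0 := by norm_cast; omega
  push_cast at hcard ⊢
  have hbound := hsum A _ _ hA (fun x hx y hy hxy => hsep x hx y hy hxy) (by positivity) hcard μ
  rw [show ((d : ℝ) + 2 - 3) / (d + 2 - 2) = (d - 1) / d by ring_nf]
  calc ∑ ν ∈ A, (2 : ℝ) ^ (-2 * (k : ℝ)) / (2 ^ (k : ℝ) * dist ν μ + 1)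
      = 2 ^ (-2 * (k : ℝ)) * ∑ ν ∈ A, (dist ν μ / 2 ^ (-(k : ℝ)) + 1)⁻¹ := by
        rw [mul_sum]
        refine sum_congr rfl fun ν _ => ?_
        rw [Real.rpow_neg zero_le_two, div_inv_eq_mul, div_eq_mul_inv, mul_comm (dist ν μ)]
    _ ≤ 2 ^ (-2 * (k : ℝ)) * (C * (lam * 2 ^ (-(k : ℝ) * β) * 2 ^ ((k : ℝ) * (d + 2 - 2))) ^
          (((d : ℝ) - 1) / d)) := mul_le_mul_of_nonneg_left hbound (by positivity)
    _ = _ := by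
        rw [Real.mul_rpow (by positivity) (by positivity), Real.mul_rpow hlam.le (by positivity),
          ← Real.rpow_mul zero_le_two, ← Real.rpow_mul zero_le_two]
        have : (2 : ℝ) ^ (-2 * (k : ℝ)) * 2 ^ ((k : ℝ) * (d + 2 - 2) * ((d - 1) / d)) =
            2 ^ ((k : ℝ) * (d + 2 - 5)) := by
          rw [← Real.rpow_add two_pos]
          congr 1
          field_simp
          ring
        linear_combination
          (C * lam ^ (((d : ℝ) - 1) / d) * 2 ^ (-(k : ℝ) * β * ((d - 1) / d))) * this
end

section
/- Let C ⊂ ℝⁿ be a subset of an (n−2)-dimensional unit sphere with 𝓗^{n-2}(C) ≥ m > 0, and let δ ∈ (0,1). Then the δ-neighborhood D = {x ∈ ℝⁿ : dist(x, C) ≤ δ} has Lebesgue measure |D| ≥ c_n·m·δ² for a constant c_n > 0 depending only on n. -/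
/-!
Write `k = n - 2`. Cover `C` by the `δ/4`-balls around a maximal `δ/4`-separated finite set
`s ⊆ C`. Each such ball meets the sphere in a cap which the gnomonic projection from the tangent
`k`-plane parametrises, 2-Lipschitzly, by a flat `k`-ball of radius `δ/2`; hence the cap has
`μH[k] ≤ κ δ^k` with `κ` the `μH[k]`-measure of the unit `k`-ball, and `m ≤ #s κ δ^k`. The
`δ/8`-balls around `s` are disjoint and lie in the `δ`-neighbourhood of `C`, whose volume is
therefore at least `#s β (δ/8)^n ≥ β m δ² / (8^n κ)`, `β` being the volume of the unit `n`-ball.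
-/

open MeasureTheory Metric Module
open scoped ENNReal NNReal RealInnerProductSpace

theorem norm_inv_smul_sub_inv_smul_le {E : Type*} [NormedAddCommGroup E] [NormedSpace ℝ E]
    {a b : E} (ha : 1 ≤ ‖a‖) (hb : b ≠ 0) : ‖‖a‖⁻¹ • a - ‖b‖⁻¹ • b‖ ≤ 2 * ‖a - b‖ := by
  have ha₀ : 0 < ‖a‖ := one_pos.trans_le ha
  have hb₀ : 0 < ‖b‖ := norm_pos_iff.mpr hb
  have h₁ : ‖‖a‖⁻¹ • (a - b)‖ ≤ ‖a - b‖ := by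
    rw [norm_smul, norm_inv, norm_norm]
    exact mul_le_of_le_one_left (norm_nonneg _) (inv_le_one_of_one_le₀ ha)
  have h₂ : ‖(‖a‖⁻¹ - ‖b‖⁻¹) • b‖ ≤ ‖a - b‖ := calc
    ‖(‖a‖⁻¹ - ‖b‖⁻¹) • b‖ = |‖a‖ - ‖b‖| / ‖a‖ := by
      rw [norm_smul, Real.norm_eq_abs, inv_sub_inv ha₀.ne' hb₀.ne', abs_div,
        abs_of_pos (mul_pos ha₀ hb₀), abs_sub_comm]
      field_simp
    _ ≤ |‖a‖ - ‖b‖| := div_le_self (abs_nonneg _) ha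
    _ ≤ ‖a - b‖ := abs_norm_sub_norm_le a b
  calc ‖‖a‖⁻¹ • a - ‖b‖⁻¹ • b‖ = ‖‖a‖⁻¹ • (a - b) + (‖a‖⁻¹ - ‖b‖⁻¹) • b‖ := by
        rw [smul_sub, sub_smul, sub_add_sub_cancel]
    _ ≤ 2 * ‖a - b‖ := by linarith [norm_add_le (‖a‖⁻¹ • (a - b)) ((‖a‖⁻¹ - ‖b‖⁻¹) • b)]

section Gnomonic

variable {F : Type*} [NormedAddCommGroup F] [InnerProductSpace ℝ F]

/-- Central projection of the tangent hyperplane of the unit sphere at `u` onto the sphere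
(the tangent vector `v` standing for the point `u + v`). -/
noncomputable def gnomonic (u v : F) : F := ‖u + v‖⁻¹ • (u + v)

theorem one_le_norm_add_of_inner_eq_zero {u v : F} (hu : ‖u‖ = 1) (huv : ⟪u, v⟫ = 0) :
    1 ≤ ‖u + v‖ := by
  have h := norm_add_sq_eq_norm_sq_add_norm_sq_real huv
  rw [hu] at h
  nlinarith [norm_nonneg (u + v), mul_self_nonneg ‖v‖]

theorem dist_gnomonic_le {u v w : F} (hu : ‖u‖ = 1) (hv : ⟪u, v⟫ = 0) (hw : ⟪u, w⟫ = 0) :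
    dist (gnomonic u v) (gnomonic u w) ≤ 2 * dist v w := by
  have hw₀ : u + w ≠ 0 :=
    norm_pos_iff.mp (one_pos.trans_le (one_le_norm_add_of_inner_eq_zero hu hw))
  simpa [gnomonic, dist_eq_norm] using
    norm_inv_smul_sub_inv_smul_le (one_le_norm_add_of_inner_eq_zero hu hv) hw₀

theorem sphere_inter_closedBall_subset_gnomonic_image {u : F} (hu : ‖u‖ = 1) {r : ℝ}
    (hr : r ≤ 1 / 2) :
    sphere 0 1 ∩ closedBall u r ⊆ gnomonic u '' {v | ⟪u, v⟫ = 0 ∧ ‖v‖ ≤ 2 * r} := by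
  rintro x ⟨hx, hxu⟩
  rw [mem_sphere_zero_iff_norm] at hx
  rw [mem_closedBall, dist_eq_norm] at hxu
  set a := ⟪u, x⟫
  have hxu_sq : ‖x - u‖ ^ 2 = 2 - 2 * a := by
    rw [norm_sub_sq_real, hu, hx, real_inner_comm]; ring
  have ha_le : a ≤ 1 := by simpa [hu, hx] using real_inner_le_norm u x
  have hr₀ : 0 ≤ r := (norm_nonneg _).trans hxu
  have hxu_sq_le : ‖x - u‖ ^ 2 ≤ r ^ 2 := pow_le_pow_left₀ (norm_nonneg _) hxu 2
  have ha : 1 / 2 ≤ a := by nlinarith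
  have ha₀ : 0 < a := by linarith
  -- the tangent vector through `x` is `x / a - u`, of norm `‖x - a u‖ / a`
  have hxau_sq : ‖x - a • u‖ ^ 2 = 1 - a ^ 2 := by
    rw [norm_sub_sq_real, real_inner_smul_right, norm_smul, Real.norm_eq_abs, abs_of_pos ha₀,
      hu, hx, real_inner_comm]
    ring
  have hxau : ‖x - a • u‖ ≤ r := by nlinarith [norm_nonneg (x - a • u)]
  refine ⟨a⁻¹ • x - u, ⟨?_, ?_⟩, ?_⟩
  · rw [inner_sub_right, real_inner_smul_right, real_inner_self_eq_norm_sq, hu]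
    field_simp
    ring
  · rw [show a⁻¹ • x - u = a⁻¹ • (x - a • u) by
      rw [smul_sub, smul_smul, inv_mul_cancel₀ ha₀.ne', one_smul], norm_smul, norm_inv,
      Real.norm_of_nonneg ha₀.le, inv_mul_le_iff₀ ha₀]
    nlinarith
  · rw [gnomonic, add_sub_cancel, norm_smul, norm_inv, Real.norm_of_nonneg ha₀.le, hx, mul_one,
      inv_inv, smul_smul, mul_inv_cancel₀ ha₀.ne', one_smul]

theorem hausdorffMeasure_sphere_inter_closedBall_le [MeasurableSpace F] [BorelSpace F] {k : ℕ}
    (hF : finrank ℝ F = k + 1) {u : F} (hu : ‖u‖ = 1) {r : ℝ} (hr₀ : 0 ≤ r) (hr : r ≤ 1 / 2) :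
    μH[k] (sphere 0 1 ∩ closedBall u r) ≤
      ENNReal.ofReal ((4 * r) ^ k) * μH[k] (closedBall (0 : EuclideanSpace ℝ (Fin k)) 1) := by
  have : Fact (finrank ℝ F = k + 1) := ⟨hF⟩
  have : FiniteDimensional ℝ F := .of_fact_finrank_eq_succ k
  have hT : finrank ℝ (ℝ ∙ u)ᗮ = k :=
    Submodule.finrank_orthogonal_span_singleton (norm_ne_zero_iff.mp (hu ▸ one_ne_zero))
  let e := ((stdOrthonormalBasis ℝ (ℝ ∙ u)ᗮ).reindex (finCongr hT)).repr.symm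
  have he (y) : ⟪u, (e y : F)⟫ = 0 := Submodule.mem_orthogonal_singleton_iff_inner_right.mp (e y).2
  let g (y : EuclideanSpace ℝ (Fin k)) : F := gnomonic u (e y)
  have hlip : LipschitzWith 2 g := .of_dist_le_mul fun y y' ↦ by
    have := dist_gnomonic_le hu (he y) (he y')
    rwa [← Subtype.dist_eq, e.dist_map] at this
  have hcap : sphere 0 1 ∩ closedBall u r ⊆ g '' closedBall 0 (2 * r) := by
    intro x hx
    obtain ⟨v, ⟨hv, hvr⟩, rfl⟩ := sphere_inter_closedBall_subset_gnomonic_image hu hr hx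
    refine ⟨e.symm ⟨v, Submodule.mem_orthogonal_singleton_iff_inner_right.mpr hv⟩, ?_, ?_⟩
    · simpa using hvr
    · simp [g]
  calc μH[k] (sphere 0 1 ∩ closedBall u r)
      ≤ μH[k] (g '' closedBall 0 (2 * r)) := measure_mono hcap
    _ ≤ (2 : ℝ≥0∞) ^ k * μH[k] (closedBall (0 : EuclideanSpace ℝ (Fin k)) (2 * r)) := by
      simpa using hlip.hausdorffMeasure_image_le (Nat.cast_nonneg k) _
    _ = ENNReal.ofReal ((4 * r) ^ k) * μH[k] (closedBall (0 : EuclideanSpace ℝ (Fin k)) 1) := by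
      rw [Measure.addHaar_closedBall' _ _ (by positivity), finrank_euclideanSpace_fin, ← mul_assoc,
        show (4 * r) ^ k = 2 ^ k * (2 * r) ^ k by rw [← mul_pow, ← mul_assoc]; norm_num,
        ENNReal.ofReal_mul (by positivity), ENNReal.ofReal_pow zero_le_two, ENNReal.ofReal_ofNat]

end Gnomonic

theorem hausdorffMeasure_affineSphere_inter_closedBall_le {E : Type*} [NormedAddCommGroup E]
    [InnerProductSpace ℝ E] [MeasurableSpace E] [BorelSpace E] {k : ℕ}
    {W : Submodule ℝ E} (hW : finrank ℝ W = k + 1) {z t : E}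
    (ht : t ∈ {x | x - z ∈ W ∧ dist x z = 1}) {r : ℝ} (hr₀ : 0 ≤ r) (hr : r ≤ 1 / 2) :
    μH[k] ({x | x - z ∈ W ∧ dist x z = 1} ∩ closedBall t r) ≤
      ENNReal.ofReal ((4 * r) ^ k) * μH[k] (closedBall (0 : EuclideanSpace ℝ (Fin k)) 1) := by
  let g (w : W) : E := z + w
  have hg : Isometry g := (isometry_add_left z).comp isometry_subtype_coe
  have hsub : {x | x - z ∈ W ∧ dist x z = 1} ∩ closedBall t r ⊆
      g '' (sphere 0 1 ∩ closedBall ⟨t - z, ht.1⟩ r) := by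
    rintro x ⟨⟨hxW, hx⟩, hxt⟩
    refine ⟨⟨x - z, hxW⟩, ⟨?_, ?_⟩, add_sub_cancel z x⟩
    · simpa [dist_eq_norm] using hx
    · simpa [Subtype.dist_eq, dist_eq_norm] using hxt
  calc _ ≤ μH[k] (g '' (sphere 0 1 ∩ closedBall ⟨t - z, ht.1⟩ r)) := measure_mono hsub
    _ = μH[k] (sphere 0 1 ∩ closedBall (⟨t - z, ht.1⟩ : W) r) :=
      hg.hausdorffMeasure_image (.inl k.cast_nonneg) _
    _ ≤ _ :=
      hausdorffMeasure_sphere_inter_closedBall_le hW (by simpa [dist_eq_norm] using ht.2) hr₀ hr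

theorem exists_pos_measure_closedBall_eq_ofReal {X : Type*} [PseudoMetricSpace X] [ProperSpace X]
    [MeasurableSpace X] [OpensMeasurableSpace X] (μ : Measure X) [μ.IsOpenPosMeasure]
    [IsFiniteMeasureOnCompacts μ] (x : X) {r : ℝ} (hr : 0 < r) :
    ∃ β : ℝ, 0 < β ∧ μ (closedBall x r) = ENNReal.ofReal β :=
  ⟨_, ENNReal.toReal_pos (measure_closedBall_pos μ x hr).ne' measure_closedBall_lt_top.ne,
    (ENNReal.ofReal_toReal measure_closedBall_lt_top.ne).symm⟩

section Packing

variable {X : Type*}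

theorem measure_le_card_mul_of_subset_biUnion {ι : Type*} {m : MeasurableSpace X} (ν : Measure X)
    {C : Set X} {s : Finset ι} {f : ι → Set X} (hC : C ⊆ ⋃ i ∈ s, f i) {M : ℝ≥0∞}
    (hM : ∀ i ∈ s, ν (C ∩ f i) ≤ M) : ν C ≤ s.card * M := calc
  ν C = ν (⋃ i ∈ s, C ∩ f i) := by rw [← Set.inter_iUnion₂, Set.inter_eq_left.mpr hC]
  _ ≤ ∑ i ∈ s, ν (C ∩ f i) := measure_biUnion_finset_le s _
  _ ≤ ∑ _i ∈ s, M := Finset.sum_le_sum hM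
  _ = s.card * M := by rw [Finset.sum_const, nsmul_eq_mul]

theorem TotallyBounded.packingNumber_ne_top [PseudoEMetricSpace X] {C : Set X}
    (hC : TotallyBounded C) {ε : ℝ≥0} (hε : ε ≠ 0) : packingNumber ε C ≠ ⊤ := by
  obtain ⟨N, -, hN, hNC⟩ := exists_finite_isCover_of_totallyBounded (ε := ε / 2) (by simpa) hC
  have := packingNumber_two_mul_le_externalCoveringNumber (ε / 2) C
  rw [mul_div_cancel₀ _ two_ne_zero] at this
  exact ne_top_of_le_ne_top hN.encard_lt_top.ne (this.trans hNC.externalCoveringNumber_le_encard)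

variable [PseudoMetricSpace X]

theorem TotallyBounded.exists_finset_pairwise_lt_dist_subset_iUnion_closedBall {C : Set X}
    (hC : TotallyBounded C) {ε : ℝ} (hε : 0 < ε) :
    ∃ s : Finset X, ↑s ⊆ C ∧ (s : Set X).Pairwise (fun x y ↦ ε < dist x y) ∧
      C ⊆ ⋃ t ∈ s, closedBall t ε := by
  have hP := hC.packingNumber_ne_top (ε := ε.toNNReal) (by simpa using hε)
  have hfin : (maximalSeparatedSet ε.toNNReal C).Finite :=
    Set.encard_ne_top_iff.mp (by rwa [encard_maximalSeparatedSet hP])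
  refine ⟨hfin.toFinset, by simpa using maximalSeparatedSet_subset, ?_, ?_⟩
  · rw [Set.Finite.coe_toFinset]
    refine isSeparated_maximalSeparatedSet.mono' fun x y h ↦ ?_
    rw [edist_dist] at h
    exact (ENNReal.ofReal_lt_ofReal_iff_of_nonneg hε.le).mp h
  · simpa [Real.coe_toNNReal _ hε.le] using
      (isCover_maximalSeparatedSet hP).subset_iUnion_closedBall

variable [MeasurableSpace X] [OpensMeasurableSpace X]

theorem card_mul_le_measure_cthickening (μ : Measure X) {C : Set X} {s : Finset X} (hsC : ↑s ⊆ C)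
    {ε : ℝ} (hs : (s : Set X).Pairwise (fun x y ↦ ε < dist x y)) {b : ℝ≥0∞}
    (hb : ∀ t ∈ s, b ≤ μ (closedBall t (ε / 2))) : s.card * b ≤ μ (cthickening (ε / 2) C) := by
  have hdisj : (s : Set X).PairwiseDisjoint (closedBall · (ε / 2)) :=
    hs.mono' fun x y h ↦ closedBall_disjoint_closedBall (by linarith)
  calc s.card * b = ∑ _t ∈ s, b := by rw [Finset.sum_const, nsmul_eq_mul]
    _ ≤ ∑ t ∈ s, μ (closedBall t (ε / 2)) := Finset.sum_le_sum hb
    _ = μ (⋃ t ∈ s, closedBall t (ε / 2)) :=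
      (measure_biUnion_finset hdisj fun _ _ ↦ measurableSet_closedBall).symm
    _ ≤ μ (cthickening (ε / 2) C) := measure_mono <| Set.iUnion₂_subset fun t ht ↦
      closedBall_subset_cthickening (hsC ht) _

/-- A maximal `ε`-separated subset of `C` bounds `ν C` from above and the `μ`-measure of the
`ε / 2`-neighbourhood of `C` from below. -/
theorem TotallyBounded.measure_mul_le_mul_measure_cthickening (ν μ : Measure X) {C : Set X}
    (hC : TotallyBounded C) {ε : ℝ} (hε : 0 < ε) {M b : ℝ≥0∞}
    (hM : ∀ t ∈ C, ν (C ∩ closedBall t ε) ≤ M) (hb : ∀ t ∈ C, b ≤ μ (closedBall t (ε / 2))) :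
    ν C * b ≤ M * μ (cthickening (ε / 2) C) := by
  obtain ⟨s, hsC, hsep, hcover⟩ :=
    hC.exists_finset_pairwise_lt_dist_subset_iUnion_closedBall hε
  calc ν C * b ≤ s.card * M * b := by
        gcongr
        exact measure_le_card_mul_of_subset_biUnion ν hcover fun t ht ↦ hM t (hsC ht)
    _ = M * (s.card * b) := by ring
    _ ≤ M * μ (cthickening (ε / 2) C) := by
        gcongr
        exact card_mul_le_measure_cthickening μ hsC hsep fun t ht ↦ hb t (hsC ht)

end Packing

theorem hausdorffMeasure_mul_le_mul_measure_cthickening {E : Type*} [NormedAddCommGroup E]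
    [InnerProductSpace ℝ E] [FiniteDimensional ℝ E] [MeasurableSpace E] [BorelSpace E]
    (μ : Measure E) [μ.IsAddHaarMeasure] {k : ℕ} {W : Submodule ℝ E} (hW : finrank ℝ W = k + 1)
    {z : E} {C : Set E} (hC : C ⊆ {x | x - z ∈ W ∧ dist x z = 1}) {δ : ℝ} (hδ : 0 < δ)
    (hδ₂ : δ ≤ 2) :
    μH[k] C * (ENNReal.ofReal ((δ / 8) ^ finrank ℝ E) * μ (closedBall 0 1)) ≤
      ENNReal.ofReal (δ ^ k) * μH[k] (closedBall (0 : EuclideanSpace ℝ (Fin k)) 1) *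
        μ (cthickening δ C) := by
  have hcap (t) (ht : t ∈ C) : μH[k] (C ∩ closedBall t (δ / 4)) ≤
      ENNReal.ofReal (δ ^ k) * μH[k] (closedBall (0 : EuclideanSpace ℝ (Fin k)) 1) := by
    have := hausdorffMeasure_affineSphere_inter_closedBall_le hW (hC ht) (by positivity)
      (by linarith : δ / 4 ≤ 1 / 2)
    rw [show 4 * (δ / 4) = δ by ring] at this
    exact (measure_mono (Set.inter_subset_inter_left _ hC)).trans this
  have hball (t : E) : ENNReal.ofReal ((δ / 8) ^ finrank ℝ E) * μ (closedBall 0 1) ≤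
      μ (closedBall t (δ / 4 / 2)) := by
    rw [show δ / 4 / 2 = δ / 8 by ring,
      Measure.addHaar_closedBall' μ t (r := δ / 8) (by positivity)]
  have hCb : TotallyBounded C :=
    (isCompact_sphere z 1).totallyBounded.subset fun x hx ↦ mem_sphere.mpr (hC hx).2
  calc _ ≤ _ * μ (cthickening (δ / 4 / 2) C) :=
        hCb.measure_mul_le_mul_measure_cthickening _ μ (by positivity) hcap fun t _ ↦ hball t
    _ ≤ _ := mul_le_mul_right (measure_mono (cthickening_mono (by linarith) C)) _

theorem sausage_of_sphere_subset (n : ℕ) (hn : 3 ≤ n) :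
    ∃ c : ℝ, 0 < c ∧ ∀ (C : Set (EuclideanSpace ℝ (Fin n))) (m δ : ℝ),
      0 < m → 0 < δ → δ < 1 →
      (∃ (z : EuclideanSpace ℝ (Fin n)) (W : Submodule ℝ (EuclideanSpace ℝ (Fin n))),
        Module.finrank ℝ W = n - 1 ∧ C ⊆ {x | x - z ∈ W ∧ dist x z = 1}) →
      ENNReal.ofReal m ≤ μH[(n:ℝ)-2] C →
      ENNReal.ofReal (c * m * δ^2) ≤ volume (Metric.cthickening δ C) := by
  obtain ⟨k, rfl⟩ : ∃ k, n = k + 2 := ⟨n - 2, by omega⟩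
  obtain ⟨β, hβ, hB⟩ := exists_pos_measure_closedBall_eq_ofReal volume
    (0 : EuclideanSpace ℝ (Fin (k + 2))) one_pos
  obtain ⟨κ, hκ, hK⟩ := exists_pos_measure_closedBall_eq_ofReal μH[k]
    (0 : EuclideanSpace ℝ (Fin k)) one_pos
  refine ⟨β / (8 ^ (k + 2) * κ), by positivity, ?_⟩
  rintro C m δ hm hδ hδ₁ ⟨z, W, hW, hCS⟩ hmC
  rw [show ((k + 2 : ℕ) : ℝ) - 2 = k by push_cast; ring] at hmC
  have key := (mul_le_mul_left hmC _).trans <| hausdorffMeasure_mul_le_mul_measure_cthickening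
    volume (by simpa using hW) hCS hδ (by linarith)
  rw [finrank_euclideanSpace_fin, hB, hK, ← ENNReal.ofReal_mul (by positivity),
    ← ENNReal.ofReal_mul hm.le, ← ENNReal.ofReal_mul (by positivity)] at key
  calc ENNReal.ofReal (β / (8 ^ (k + 2) * κ) * m * δ ^ 2)
      = ENNReal.ofReal (m * ((δ / 8) ^ (k + 2) * β)) / ENNReal.ofReal (δ ^ k * κ) := by
        rw [← ENNReal.ofReal_div_of_pos (by positivity)]
        congr 1
        rw [div_pow]
        field_simp
        ring
    _ ≤ volume (cthickening δ C) := ENNReal.div_le_of_le_mul' key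
end
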